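/- arXiv:1511.04144 — 3 statements merged into one kernel-verified Lean document; each statement's English description precedes it below -/
import Mathlib

section
/- Let P₀ and P₁ be probability measures on a measurable space and let A be a measurable set achieving the total variation distance, i.e., P₀(A) − P₁(A) = TV(P₀,P₁). Let X₁,…,Xₙ be i.i.d. with common distribution P satisfying TV(P,P₀) ≤ ξ, and let Pₙ(A) = (1/n)∑ᵢ 1{Xᵢ∈A}. If TV(P₀,P₁) > 2ξ, then the probability that |Pₙ(A) − P₀(A)| > |Pₙ(A) − P₁(A)| is at most 2·exp(−(n/2)·(TV(P₀,P₁) − 2ξ)²). -/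
/-!
On the event that the test rejects, the empirical frequency of `A` lies below the midpoint
`(P₀(A) + P₁(A))/2 = P₀(A) - TV(P₀,P₁)/2`, hence, since `|P(A) - P₀(A)| ≤ ξ`, at least
`(TV(P₀,P₁) - 2ξ)/2` below its mean `P(A)`. The indicators of `A` are i.i.d. and `[0,1]`-valued,
so Hoeffding's inequality bounds the probability of such a deviation by
`exp(-(n/2)(TV(P₀,P₁) - 2ξ)²)`.
-/

open MeasureTheory

/-- Total variation distance between two measures: supremum over measurable sets of
the absolute difference of their (real-valued) masses. -/
noncomputable def tvDist {Ω : Type*} [MeasurableSpace Ω] (P Q : Measure Ω) : ℝ :=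
  ⨆ B : {B : Set Ω // MeasurableSet B}, |(P B.1).toReal - (Q B.1).toReal|

open ProbabilityTheory Real

section

variable {Ω : Type*} [MeasurableSpace Ω]

lemma tvDist_nonneg (P Q : Measure Ω) : 0 ≤ tvDist P Q :=
  Real.iSup_nonneg fun _ ↦ abs_nonneg _

lemma abs_measureReal_sub_le_tvDist (P Q : Measure Ω) [IsFiniteMeasure P] [IsFiniteMeasure Q]
    {B : Set Ω} (hB : MeasurableSet B) : |P.real B - Q.real B| ≤ tvDist P Q := by
  refine le_ciSup (f := fun B : {B : Set Ω // MeasurableSet B} ↦ |P.real B.1 - Q.real B.1|)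
    ⟨P.real Set.univ + Q.real Set.univ, ?_⟩ ⟨B, hB⟩
  rintro _ ⟨C, rfl⟩
  have hP := measureReal_mono (μ := P) (Set.subset_univ C.1)
  have hQ := measureReal_mono (μ := Q) (Set.subset_univ C.1)
  exact (abs_sub _ _).trans (by simp only [abs_of_nonneg measureReal_nonneg]; linarith)

lemma hasSubgaussianMGF_measureReal_sub_indicator (P : Measure Ω) [IsProbabilityMeasure P]
    {A : Set Ω} (hA : MeasurableSet A) :
    HasSubgaussianMGF (fun y ↦ P.real A - A.indicator (fun _ ↦ (1 : ℝ)) y) (1 / 4) P := by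
  have hmeas : Measurable (A.indicator fun _ ↦ (1 : ℝ)) := measurable_const.indicator hA
  have h := (hasSubgaussianMGF_of_mem_Icc (μ := P) (a := 0) (b := 1) hmeas.aemeasurable
    (ae_of_all _ fun y ↦ ⟨Set.indicator_nonneg (fun _ _ ↦ zero_le_one) y,
      Set.indicator_le_self' (fun _ _ ↦ zero_le_one) y⟩)).neg
  rw [integral_indicator_const _ hA] at h
  convert h using 1
  · ext y; simp
  · ext; norm_num

lemma measureReal_pi_sum_sub_indicator_ge_le {ι : Type*} [Fintype ι]
    (P : Measure Ω) [IsProbabilityMeasure P] {A : Set Ω} (hA : MeasurableSet A)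
    {ε : ℝ} (hε : 0 ≤ ε) :
    (Measure.pi fun _ : ι ↦ P).real
        {x | ε ≤ ∑ i, (P.real A - A.indicator (fun _ ↦ (1 : ℝ)) (x i))}
      ≤ exp (-2 * ε ^ 2 / Fintype.card ι) := by
  set g : Ω → ℝ := fun y ↦ P.real A - A.indicator (fun _ ↦ (1 : ℝ)) y
  have hg : Measurable g := measurable_const.sub (measurable_const.indicator hA)
  have hcoord : ∀ i, HasSubgaussianMGF (fun x : ι → Ω ↦ g (x i)) (1 / 4)
      (Measure.pi fun _ ↦ P) := fun i ↦
    HasSubgaussianMGF.of_map (X := g) (Y := Function.eval i) (measurable_pi_apply i).aemeasurable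
      (by rw [(measurePreserving_eval (fun _ ↦ P) i).map_eq]
          exact hasSubgaussianMGF_measureReal_sub_indicator P hA)
  have h := HasSubgaussianMGF.measure_sum_ge_le_of_iIndepFun
    (iIndepFun_pi fun _ ↦ hg.aemeasurable) (s := Finset.univ) (fun i _ ↦ hcoord i) hε
  convert h using 2
  simp only [Finset.sum_const, Finset.card_univ, nsmul_eq_mul, NNReal.coe_mul, NNReal.coe_natCast]
  push_cast
  ring

end

lemma two_mul_lt_add_of_abs_sub_lt_abs_sub {m a b : ℝ} (hba : b < a) (h : |m - b| < |m - a|) :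
    2 * m < a + b := by
  have := sq_lt_sq.mpr h
  nlinarith

/-- If `A` achieves the total variation distance between `P₀` and `P₁`,
`X₁,…,Xₙ` are i.i.d. from `P` with `TV(P,P₀) ≤ ξ`, and `TV(P₀,P₁) > 2ξ`, then the
probability that the empirical frequency of `A` is closer to `P₁(A)` than to `P₀(A)`
is at most `2 exp(-(n/2)(TV(P₀,P₁)-2ξ)²)`. -/
theorem stmt0 {Ω : Type*} [MeasurableSpace Ω]
    (P₀ P₁ P : Measure Ω) [IsProbabilityMeasure P₀] [IsProbabilityMeasure P₁]
    [IsProbabilityMeasure P]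
    (A : Set Ω) (hA : MeasurableSet A)
    (hAmax : (P₀ A).toReal - (P₁ A).toReal = tvDist P₀ P₁)
    (ξ : ℝ) (hξ : tvDist P P₀ ≤ ξ)
    (n : ℕ) (hn : 0 < n)
    (hgap : tvDist P₀ P₁ > 2 * ξ) :
    ((Measure.pi (fun _ : Fin n => P))
      {x | |(∑ i, A.indicator (fun _ => (1:ℝ)) (x i)) / n - (P₀ A).toReal|
            > |(∑ i, A.indicator (fun _ => (1:ℝ)) (x i)) / n - (P₁ A).toReal|}).toReal
      ≤ 2 * Real.exp (-((n : ℝ) / 2) * (tvDist P₀ P₁ - 2 * ξ) ^ 2) := by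
  set τ := tvDist P₀ P₁
  set δ := (τ - 2 * ξ) / 2 with hδ
  have hτ : 0 < τ := by linarith [tvDist_nonneg P P₀]
  have hPA : |(P A).toReal - (P₀ A).toReal| ≤ ξ := (abs_measureReal_sub_le_tvDist P P₀ hA).trans hξ
  calc _ ≤ (Measure.pi fun _ : Fin n ↦ P).real
          {x | n * δ ≤ ∑ i, ((P A).toReal - A.indicator (fun _ ↦ (1 : ℝ)) (x i))} := by
        refine measureReal_mono fun x hx ↦ ?_
        have hmid := two_mul_lt_add_of_abs_sub_lt_abs_sub (by linarith) hx
        have hfreq : (∑ i, A.indicator (fun _ => (1:ℝ)) (x i)) / n ≤ (P A).toReal - δ := by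
          linarith [(abs_le.mp hPA).1]
        rw [div_le_iff₀ (by exact_mod_cast hn)] at hfreq
        simp only [Set.mem_ofPred_eq, Finset.sum_sub_distrib, Finset.sum_const, Finset.card_univ,
          Fintype.card_fin, nsmul_eq_mul]
        linarith
    _ ≤ exp (-2 * (n * δ) ^ 2 / Fintype.card (Fin n)) :=
      measureReal_pi_sum_sub_indicator_ge_le P hA (by positivity)
    _ = exp (-((n : ℝ) / 2) * (τ - 2 * ξ) ^ 2) := by
      rw [Fintype.card_fin, hδ]; field_simp
    _ ≤ _ := by linarith [exp_pos (-((n : ℝ) / 2) * (τ - 2 * ξ) ^ 2)]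
end

section
/- Let P₀, P₁ be probability measures with TV(P₀,P₁) > 2ε for some ε ∈ [0,1), and let A = {p₀ > p₁} where pⱼ = dPⱼ/d(P₀+P₁). For i.i.d. observations X₁,…,Xₙ from any distribution P of the form (1−ε)P₀ + εQ (Q arbitrary), the Scheffé test ϕ = 1{|Pₙ(A) − P₀(A)| > |Pₙ(A) − P₁(A)|} satisfies: sup over Q of [(1−ε)P₀+εQ](ϕ=1) plus sup over Q of [(1−ε)P₁+εQ](ϕ=0) is at most 4·exp(−(n/2)·(TV(P₀,P₁) − 2ε)²). -/
open MeasureTheory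

noncomputable def mix {Ω : Type*} [MeasurableSpace Ω] (ε : ℝ) (P Q : Measure Ω) : Measure Ω :=
  (ENNReal.ofReal (1 - ε)) • P + (ENNReal.ofReal ε) • Q

/-!
Scheffé's set `A = {p₀ > p₁}` satisfies `TV(P₀,P₁) ≤ P₀(A) - P₁(A)`, since the density
difference `p₀ - p₁` is nonnegative exactly on `A`. A contamination of mass `ε` moves the
probability of `A` by at most `ε`, so the mean of `Pₙ(A)` is at least `P₀(A) - ε` under the null
and at most `P₁(A) + ε` under the alternative: both lie `(TV - 2ε)/2` away from the threshold
`(P₀(A) + P₁(A))/2` of the test. Each error thus needs the empirical frequency of `A` to deviate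
from its mean by `(TV - 2ε)/2`, which by Hoeffding's inequality has probability at most
`exp(-n(TV - 2ε)²/2)`.
-/

open ProbabilityTheory Real

lemma abs_sub_lt_abs_sub_iff_lt_midpoint {a b y : ℝ} (hba : b < a) :
    |y - b| < |y - a| ↔ y < (a + b) / 2 := by
  rw [← sq_lt_sq]
  constructor <;> intro h <;> nlinarith

lemma ProbabilityTheory.HasSubgaussianMGF.measureReal_mul_le {Ω' : Type*}
    {mΩ' : MeasurableSpace Ω'} {ν : Measure Ω'} {Y : Ω' → ℝ} {n : ℕ}
    (hY : HasSubgaussianMGF Y (n / 4) ν) {t : ℝ} (ht : 0 ≤ t) :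
    ν.real {x | n * t ≤ Y x} ≤ exp (-2 * n * t ^ 2) := by
  refine (hY.measure_ge_le (by positivity)).trans_eq ?_
  rcases eq_or_ne (n : ℝ) 0 with hn | hn
  · simp [hn]
  · congr 1
    push_cast
    field_simp
    norm_num

section

variable {Ω : Type*} [MeasurableSpace Ω]

section Scheffe

variable (μ ν : Measure Ω)

def scheffeSet : Set Ω := {x | ν.rnDeriv (μ + ν) x < μ.rnDeriv (μ + ν) x}

variable {μ ν}

lemma measurableSet_scheffeSet : MeasurableSet (scheffeSet μ ν) :=
  measurableSet_lt (Measure.measurable_rnDeriv _ _) (Measure.measurable_rnDeriv _ _)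

lemma measureReal_sub_le_scheffeSet [IsFiniteMeasure μ] [IsFiniteMeasure ν] {B : Set Ω}
    (hB : MeasurableSet B) :
    μ.real B - ν.real B ≤ μ.real (scheffeSet μ ν) - ν.real (scheffeSet μ ν) := by
  set ρ := μ + ν
  set g : Ω → ℝ := fun x => (μ.rnDeriv ρ x).toReal - (ν.rnDeriv ρ x).toReal
  have hg : Integrable g ρ :=
    Measure.integrable_toReal_rnDeriv.sub Measure.integrable_toReal_rnDeriv
  have hsetIntegral (s : Set Ω) : ∫ x in s, g x ∂ρ = μ.real s - ν.real s := by
    rw [integral_sub Measure.integrable_toReal_rnDeriv.integrableOn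
        Measure.integrable_toReal_rnDeriv.integrableOn,
      Measure.setIntegral_toReal_rnDeriv (Measure.AbsolutelyContinuous.rfl.add_right ν),
      Measure.setIntegral_toReal_rnDeriv (Measure.AbsolutelyContinuous.rfl.add_right' μ)]
  rw [← hsetIntegral, ← hsetIntegral, ← integral_indicator hB,
    ← integral_indicator measurableSet_scheffeSet]
  refine integral_mono_ae (hg.indicator hB) (hg.indicator measurableSet_scheffeSet) ?_
  filter_upwards [Measure.rnDeriv_lt_top μ ρ, Measure.rnDeriv_lt_top ν ρ] with x hμ hν
  by_cases hx : x ∈ scheffeSet μ ν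
  · have : 0 ≤ g x := sub_nonneg.mpr (ENNReal.toReal_mono hμ.ne hx.le)
    rw [Set.indicator_of_mem hx]
    exact Set.indicator_le_self' (fun _ _ => this) x
  · have : g x ≤ 0 := sub_nonpos.mpr (ENNReal.toReal_mono hν.ne (not_lt.mp hx))
    rw [Set.indicator_of_notMem hx]
    exact Set.indicator_nonpos (fun _ _ => this) x

lemma tvDist_le_scheffeSet [IsProbabilityMeasure μ] [IsProbabilityMeasure ν] :
    tvDist μ ν ≤ μ.real (scheffeSet μ ν) - ν.real (scheffeSet μ ν) := by
  refine ciSup_le fun ⟨B, hB⟩ => abs_sub_le_iff.mpr ⟨measureReal_sub_le_scheffeSet hB, ?_⟩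
  have h := measureReal_sub_le_scheffeSet (μ := μ) (ν := ν) hB.compl
  rw [probReal_compl_eq_one_sub hB, probReal_compl_eq_one_sub hB] at h
  change ν.real B - μ.real B ≤ _
  linarith

end Scheffe

section Mix

variable {ε : ℝ} (P Q : Measure Ω)

lemma isProbabilityMeasure_mix (hε0 : 0 ≤ ε) (hε1 : ε ≤ 1)
    [IsProbabilityMeasure P] [IsProbabilityMeasure Q] : IsProbabilityMeasure (mix ε P Q) := by
  constructor
  simp [mix, ← ENNReal.ofReal_add (sub_nonneg.mpr hε1) hε0]

lemma mix_real_apply (hε0 : 0 ≤ ε) (hε1 : ε ≤ 1) [IsFiniteMeasure P] [IsFiniteMeasure Q]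
    (s : Set Ω) : (mix ε P Q).real s = (1 - ε) * P.real s + ε * Q.real s := by
  simp [mix, Measure.real, ENNReal.toReal_add, ENNReal.mul_ne_top, hε0, sub_nonneg.mpr hε1]

lemma abs_mix_real_sub_le (hε0 : 0 ≤ ε) (hε1 : ε ≤ 1)
    [IsProbabilityMeasure P] [IsProbabilityMeasure Q] (s : Set Ω) :
    |(mix ε P Q).real s - P.real s| ≤ ε := by
  rw [mix_real_apply P Q hε0 hε1, abs_le]
  have hP : P.real s ≤ 1 := measureReal_le_one
  have hQ : Q.real s ≤ 1 := measureReal_le_one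
  have hP₀ : 0 ≤ P.real s := measureReal_nonneg
  have hQ₀ : 0 ≤ Q.real s := measureReal_nonneg
  constructor <;> nlinarith

end Mix

section Hoeffding

variable {μ : Measure Ω} [IsProbabilityMeasure μ] {f : Ω → ℝ} {n : ℕ}

lemma hasSubgaussianMGF_pi_sum_sub_integral (hf : Measurable f)
    (hf01 : ∀ x, f x ∈ Set.Icc 0 1) :
    HasSubgaussianMGF (fun x : Fin n → Ω => ∑ i, (f (x i) - μ[f])) (n / 4)
      (Measure.pi fun _ => μ) := by
  have hindep : iIndepFun (fun i (x : Fin n → Ω) => f (x i) - μ[f]) (Measure.pi fun _ => μ) :=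
    iIndepFun_pi (X := fun _ ω => f ω - μ[f]) fun _ => (hf.sub_const _).aemeasurable
  have hcoord (i : Fin n) :
      HasSubgaussianMGF (fun x : Fin n → Ω => f (x i) - μ[f]) (1 / 4)
        (Measure.pi fun _ => μ) := by
    have h := hasSubgaussianMGF_of_mem_Icc (hf.comp (measurable_pi_apply i)).aemeasurable
      (ae_of_all (Measure.pi fun _ : Fin n => μ) fun x => hf01 (x i))
    convert h using 2
    · simp [integral_comp_eval (μ := fun _ : Fin n => μ) (i := i) hf.aestronglyMeasurable]
    · norm_num
  simpa [div_eq_mul_inv] using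
    HasSubgaussianMGF.sum_of_iIndepFun hindep (s := Finset.univ) fun i _ => hcoord i

lemma measureReal_pi_integral_add_le_mean (hf : Measurable f) (hf01 : ∀ x, f x ∈ Set.Icc 0 1)
    {t : ℝ} (ht : 0 ≤ t) :
    (Measure.pi fun _ : Fin n => μ).real {x | μ[f] + t ≤ (∑ i, f (x i)) / n}
      ≤ exp (-2 * n * t ^ 2) := by
  rcases n.eq_zero_or_pos with rfl | hn
  · simp
  convert (hasSubgaussianMGF_pi_sum_sub_integral (μ := μ) hf hf01).measureReal_mul_le ht
    using 3
  ext x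
  simp only [le_div_iff₀ (by positivity : (0 : ℝ) < n),
    Finset.sum_sub_distrib, Finset.sum_const, Finset.card_univ, Fintype.card_fin, nsmul_eq_mul]
  constructor <;> intro h <;> linarith

lemma measureReal_pi_mean_le_integral_sub (hf : Measurable f) (hf01 : ∀ x, f x ∈ Set.Icc 0 1)
    {t : ℝ} (ht : 0 ≤ t) :
    (Measure.pi fun _ : Fin n => μ).real {x | (∑ i, f (x i)) / n ≤ μ[f] - t}
      ≤ exp (-2 * n * t ^ 2) := by
  rcases n.eq_zero_or_pos with rfl | hn
  · simp
  convert (hasSubgaussianMGF_pi_sum_sub_integral (μ := μ) hf hf01).neg.measureReal_mul_le ht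
    using 3
  ext x
  simp only [div_le_iff₀ (by positivity : (0 : ℝ) < n), Pi.neg_apply,
    Finset.sum_sub_distrib, Finset.sum_const, Finset.card_univ, Fintype.card_fin, nsmul_eq_mul]
  constructor <;> intro h <;> linarith

end Hoeffding

end

theorem stmt1_general {Ω : Type*} [MeasurableSpace Ω]
    (P₀ P₁ : Measure Ω) [IsProbabilityMeasure P₀] [IsProbabilityMeasure P₁]
    (ε : ℝ) (hε0 : 0 ≤ ε) (hε1 : ε < 1)
    (hgap : tvDist P₀ P₁ > 2 * ε)
    (A : Set Ω)
    (hA : A = {x | (P₁.rnDeriv (P₀ + P₁)) x < (P₀.rnDeriv (P₀ + P₁)) x})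
    (n : ℕ)
    (Q₀ Q₁ : Measure Ω) [IsProbabilityMeasure Q₀] [IsProbabilityMeasure Q₁] :
    ((Measure.pi (fun _ : Fin n => mix ε P₀ Q₀))
      {x | |(∑ i, A.indicator (fun _ => (1:ℝ)) (x i)) / n - (P₀ A).toReal|
            > |(∑ i, A.indicator (fun _ => (1:ℝ)) (x i)) / n - (P₁ A).toReal|}).toReal
    + ((Measure.pi (fun _ : Fin n => mix ε P₁ Q₁))
      {x | ¬ (|(∑ i, A.indicator (fun _ => (1:ℝ)) (x i)) / n - (P₀ A).toReal|
            > |(∑ i, A.indicator (fun _ => (1:ℝ)) (x i)) / n - (P₁ A).toReal|)}).toReal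
      ≤ 4 * Real.exp (-((n : ℝ) / 2) * (tvDist P₀ P₁ - 2 * ε) ^ 2) := by
  have hA' : A = scheffeSet P₀ P₁ := hA
  have hAm : MeasurableSet A := hA' ▸ measurableSet_scheffeSet
  have := isProbabilityMeasure_mix P₀ Q₀ hε0 hε1.le
  have := isProbabilityMeasure_mix P₁ Q₁ hε0 hε1.le
  set f : Ω → ℝ := A.indicator fun _ => 1
  have hf : Measurable f := measurable_const.indicator hAm
  have hf01 (x : Ω) : f x ∈ Set.Icc 0 1 := by
    by_cases hx : x ∈ A <;> simp [f, hx]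
  have hmean (P : Measure Ω) [IsProbabilityMeasure P] : P[f] = P.real A :=
    integral_indicator_one hAm
  set τ := tvDist P₀ P₁
  set t := (τ - 2 * ε) / 2 with ht
  have hτ : τ ≤ P₀.real A - P₁.real A := hA' ▸ tvDist_le_scheffeSet
  have hm₀ := abs_le.mp (abs_mix_real_sub_le P₀ Q₀ hε0 hε1.le A)
  have hm₁ := abs_le.mp (abs_mix_real_sub_le P₁ Q₁ hε0 hε1.le A)
  have hba : P₁.real A < P₀.real A := by linarith
  have herr₀ := measureReal_pi_mean_le_integral_sub (μ := mix ε P₀ Q₀) (n := n) hf hf01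
    (t := t) (by linarith)
  have herr₁ := measureReal_pi_integral_add_le_mean (μ := mix ε P₁ Q₁) (n := n) hf hf01
    (t := t) (by linarith)
  rw [hmean] at herr₀ herr₁
  calc _ ≤ exp (-2 * n * t ^ 2) + exp (-2 * n * t ^ 2) := by
        gcongr
        · refine le_trans (measureReal_mono fun x hx => ?_) herr₀
          have := (abs_sub_lt_abs_sub_iff_lt_midpoint hba).mp hx
          simp only [Set.mem_ofPred_eq]
          linarith
        · refine le_trans (measureReal_mono fun x hx => ?_) herr₁
          have := not_lt.mp (mt (abs_sub_lt_abs_sub_iff_lt_midpoint hba).mpr hx)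
          simp only [Set.mem_ofPred_eq]
          linarith
    _ ≤ 4 * exp (-((n : ℝ) / 2) * (τ - 2 * ε) ^ 2) := by
        have : -2 * n * t ^ 2 = -((n : ℝ) / 2) * (τ - 2 * ε) ^ 2 := by ring
        rw [this]
        linarith [exp_pos (-((n : ℝ) / 2) * (τ - 2 * ε) ^ 2)]

/-- robust Scheffé testing error bound under Huber's ε-contamination model,
with `A = {p₀ > p₁}` for densities with respect to `P₀ + P₁`. The sum of the two worst-case
error probabilities (over arbitrary contaminations `Q₀`, `Q₁`) is at most
`4 exp(-(n/2)(TV(P₀,P₁)-2ε)²)`. -/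
theorem stmt1 {Ω : Type*} [MeasurableSpace Ω]
    (P₀ P₁ : Measure Ω) [IsProbabilityMeasure P₀] [IsProbabilityMeasure P₁]
    (ε : ℝ) (hε0 : 0 ≤ ε) (hε1 : ε < 1)
    (hgap : tvDist P₀ P₁ > 2 * ε)
    (A : Set Ω)
    (hA : A = {x | (P₁.rnDeriv (P₀ + P₁)) x < (P₀.rnDeriv (P₀ + P₁)) x})
    (n : ℕ) (hn : 0 < n)
    (Q₀ Q₁ : Measure Ω) [IsProbabilityMeasure Q₀] [IsProbabilityMeasure Q₁] :
    ((Measure.pi (fun _ : Fin n => mix ε P₀ Q₀))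
      {x | |(∑ i, A.indicator (fun _ => (1:ℝ)) (x i)) / n - (P₀ A).toReal|
            > |(∑ i, A.indicator (fun _ => (1:ℝ)) (x i)) / n - (P₁ A).toReal|}).toReal
    + ((Measure.pi (fun _ : Fin n => mix ε P₁ Q₁))
      {x | ¬ (|(∑ i, A.indicator (fun _ => (1:ℝ)) (x i)) / n - (P₀ A).toReal|
            > |(∑ i, A.indicator (fun _ => (1:ℝ)) (x i)) / n - (P₁ A).toReal|)}).toReal
      ≤ 4 * Real.exp (-((n : ℝ) / 2) * (tvDist P₀ P₁ - 2 * ε) ^ 2) :=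
  stmt1_general P₀ P₁ ε hε0 hε1 hgap A hA n Q₀ Q₁
end

section
/- In the Gaussian white noise model with Hölder class H(β,M) = {f : sup_{l,k} 2^{l(1/2+β)}|f_{lk}| ≤ M}, the modulus of continuity under supremum norm satisfies ω(ε) ≥ c·ε^{2β/(2β+1)} for a constant c > 0 and all sufficiently small ε > 0: there exist f₁, f₂ ∈ H(β,M) with TV(P_{f₁},P_{f₂}) ≤ ε/(1−ε) and ‖f₁−f₂‖_∞ ≥ c·ε^{2β/(2β+1)}. -/
open MeasureTheory ProbabilityTheory

/-- Index set of the wavelet sequence model. -/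
abbrev WIdx := Σ l : ℕ, Fin (2 ^ l)

/-!
The finite-dimensional marginals identify the noise law with the infinite product of standard
Gaussians. Take `f₁ = 0` and let `f₂` have the single coefficient `ε` at the largest level `l`
with `ε 2^{l(1/2+β)} ≤ M`. The two observation laws are products that differ in one factor only,
`N(0,1)` against `N(ε,1)`, so their total variation is at most `ε`: the densities cross at `ε/2`
and are bounded by `1`. On the other hand the wavelet lower bound gives
`‖f₁ - f₂‖_∞ ≥ C₁ 2^{l/2} ε`, and the maximality of `l` makes this `≳ ε^{2β/(2β+1)}`.
-/

open Measure Set Function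
open scoped ENNReal NNReal

lemma measure_le_add_of_scheffe {α : Type*} [MeasurableSpace α] {ν₁ ν₂ : Measure α}
    [IsFiniteMeasure ν₂] {I : Set α} (hI : MeasurableSet I)
    (hle : ∀ A ⊆ I, MeasurableSet A → ν₂ A ≤ ν₁ A)
    (hge : ∀ A ⊆ Iᶜ, MeasurableSet A → ν₁ A ≤ ν₂ A)
    {D : ℝ≥0∞} (hD : ν₁ I ≤ ν₂ I + D) {A : Set α} (hA : MeasurableSet A) :
    ν₁ A ≤ ν₂ A + D := by
  have hIA : ν₁ (I ∩ A) ≤ ν₂ (I ∩ A) + D := by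
    refine ENNReal.le_of_add_le_add_right (measure_ne_top ν₂ (I \ A)) ?_
    calc ν₁ (I ∩ A) + ν₂ (I \ A)
        ≤ ν₁ (I ∩ A) + ν₁ (I \ A) := add_le_add le_rfl (hle _ sdiff_subset (hI.diff hA))
      _ = ν₁ I := measure_inter_add_sdiff I hA
      _ ≤ ν₂ I + D := hD
      _ = ν₂ (I ∩ A) + D + ν₂ (I \ A) := by
        rw [← measure_inter_add_sdiff I hA (μ := ν₂)]; ring
  calc ν₁ A = ν₁ (A ∩ I) + ν₁ (A \ I) := (measure_inter_add_sdiff A hI).symm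
    _ ≤ ν₂ (A ∩ I) + D + ν₂ (A \ I) := by
        rw [inter_comm]
        exact add_le_add hIA (hge _ (fun x hx => hx.2) (hA.diff hI))
    _ = ν₂ A + D := by rw [← measure_inter_add_sdiff A hI (μ := ν₂)]; ring

lemma prod_apply_le_add_of_forall_le_add {α β : Type*} [MeasurableSpace α] [MeasurableSpace β]
    {μ₁ μ₂ : Measure α} [SFinite μ₁] [SFinite μ₂] {ρ : Measure β} [IsProbabilityMeasure ρ]
    {D : ℝ≥0∞} (h : ∀ A, MeasurableSet A → μ₁ A ≤ μ₂ A + D) {T : Set (α × β)}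
    (hT : MeasurableSet T) :
    μ₁.prod ρ T ≤ μ₂.prod ρ T + D := by
  rw [prod_apply_symm hT, prod_apply_symm hT]
  calc ∫⁻ y, μ₁ ((·, y) ⁻¹' T) ∂ρ ≤ ∫⁻ y, (μ₂ ((·, y) ⁻¹' T) + D) ∂ρ :=
        lintegral_mono fun y => h _ (measurable_prodMk_right hT)
    _ = ∫⁻ y, μ₂ ((·, y) ⁻¹' T) ∂ρ + D := by
        rw [lintegral_add_right _ measurable_const, lintegral_const, measure_univ, mul_one]

lemma tvDist_le_of_forall_le_add {Ω : Type*} [MeasurableSpace Ω] {P Q : Measure Ω}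
    [IsProbabilityMeasure P] [IsProbabilityMeasure Q] {D : ℝ} (hD : 0 ≤ D)
    (h : ∀ B, MeasurableSet B → P B ≤ Q B + ENNReal.ofReal D) :
    tvDist P Q ≤ D := by
  have hreal : ∀ B, MeasurableSet B → P.real B - Q.real B ≤ D := fun B hB => by
    have := ENNReal.toReal_mono (by finiteness) (h B hB)
    rw [ENNReal.toReal_add (by finiteness) ENNReal.ofReal_ne_top, ENNReal.toReal_ofReal hD] at this
    simp only [measureReal_def]
    linarith
  refine ciSup_le fun ⟨B, hB⟩ => abs_sub_le_iff.mpr ⟨hreal B hB, ?_⟩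
  have := hreal Bᶜ hB.compl
  rw [probReal_compl_eq_one_sub hB, probReal_compl_eq_one_sub hB] at this
  simp only [measureReal_def] at this
  linarith

lemma gaussianPDFReal_le_of_sq_sub_le {m₁ m₂ x : ℝ} (v : ℝ≥0) (h : (x - m₁) ^ 2 ≤ (x - m₂) ^ 2) :
    gaussianPDFReal m₂ v x ≤ gaussianPDFReal m₁ v x := by
  rw [gaussianPDFReal, gaussianPDFReal]
  gcongr _ * Real.exp (-?_ / _)

lemma gaussianReal_le_of_sq_sub_le {m₁ m₂ : ℝ} {v : ℝ≥0} (hv : v ≠ 0) {A : Set ℝ}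
    (h : ∀ x ∈ A, (x - m₁) ^ 2 ≤ (x - m₂) ^ 2) :
    gaussianReal m₂ v A ≤ gaussianReal m₁ v A := by
  rw [gaussianReal_apply _ hv, gaussianReal_apply _ hv]
  exact setLIntegral_mono (measurable_gaussianPDF _ _) fun x hx =>
    ENNReal.ofReal_le_ofReal (gaussianPDFReal_le_of_sq_sub_le v (h x hx))

lemma gaussianPDFReal_le_one (m x : ℝ) : gaussianPDFReal m 1 x ≤ 1 := by
  have hsqrt : 1 ≤ √(2 * Real.pi) :=
    Real.one_le_sqrt.mpr (by nlinarith [Real.pi_gt_three])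
  rw [gaussianPDFReal, NNReal.coe_one, mul_one, mul_one]
  calc (√(2 * Real.pi))⁻¹ * Real.exp (-(x - m) ^ 2 / 2) ≤ 1 * 1 := by
        gcongr
        · exact inv_le_one_of_one_le₀ hsqrt
        · exact Real.exp_le_one_iff.mpr (by nlinarith [sq_nonneg (x - m)])
    _ = 1 := one_mul 1

lemma gaussianReal_le_volume (m : ℝ) (A : Set ℝ) : gaussianReal m 1 A ≤ volume A := by
  rw [gaussianReal_apply _ one_ne_zero, ← setLIntegral_one]
  exact setLIntegral_mono measurable_const fun x _ =>
    ENNReal.ofReal_le_one.mpr (gaussianPDFReal_le_one m x)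

lemma gaussianReal_apply_le_shift_add {ε : ℝ} (hε : 0 ≤ ε) {A : Set ℝ} (hA : MeasurableSet A) :
    gaussianReal 0 1 A ≤ gaussianReal ε 1 A + ENNReal.ofReal ε := by
  refine measure_le_add_of_scheffe (I := Iio (ε / 2)) measurableSet_Iio
    (fun B hB _ => gaussianReal_le_of_sq_sub_le one_ne_zero fun x hx => ?_)
    (fun B hB _ => gaussianReal_le_of_sq_sub_le one_ne_zero fun x hx => ?_) ?_ hA
  · nlinarith [mem_Iio.mp (hB hx)]
  · nlinarith [not_lt.mp (show ¬x < ε / 2 from hB hx)]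
  · have hshift : gaussianReal ε 1 (Iio (ε / 2)) = gaussianReal 0 1 (Iio (-(ε / 2))) := by
      rw [← zero_add ε, ← gaussianReal_map_add_const, Measure.map_apply (measurable_add_const _)
        measurableSet_Iio, preimage_add_const_Iio]
      ring_nf
    calc gaussianReal 0 1 (Iio (ε / 2))
        ≤ gaussianReal 0 1 (Iio (-(ε / 2))) + gaussianReal 0 1 (Ico (-(ε / 2)) (ε / 2)) :=
          (measure_mono Iio_subset_Iio_union_Ico).trans (measure_union_le _ _)
      _ ≤ gaussianReal ε 1 (Iio (ε / 2)) + ENNReal.ofReal ε := by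
          rw [hshift]
          gcongr
          refine (gaussianReal_le_volume 0 _).trans_eq ?_
          rw [Real.volume_Ico]
          ring_nf

section InfinitePi

variable {ι : Type*} {X : ι → Type*}

lemma preimage_update_pi [DecidableEq ι] (s : Finset ι) (t : ∀ i, Set (X i)) (i₀ : ι) :
    (fun p : X i₀ × (∀ i, X i) => update p.2 i₀ p.1) ⁻¹' (s : Set ι).pi t
      = {a | i₀ ∈ s → a ∈ t i₀} ×ˢ ((s.erase i₀ : Set ι).pi t) := by
  ext ⟨a, x⟩
  simp only [mem_preimage, mem_pi, Finset.mem_coe, mem_prod, mem_ofPred_eq, Finset.mem_erase]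
  constructor
  · intro h
    refine ⟨fun hi₀ => by simpa using h i₀ hi₀, fun i ⟨hi, his⟩ => ?_⟩
    simpa [update_of_ne hi] using h i his
  · rintro ⟨ha, hx⟩ i his
    rcases eq_or_ne i i₀ with rfl | hi
    · simpa using ha his
    · simpa [update_of_ne hi] using hx i ⟨hi, his⟩

variable [∀ i, MeasurableSpace (X i)]

lemma infinitePi_eq_map_prod_update [DecidableEq ι] (μ ν : ∀ i, Measure (X i))
    [∀ i, IsProbabilityMeasure (μ i)] [∀ i, IsProbabilityMeasure (ν i)] (i₀ : ι)
    (h : ∀ i ≠ i₀, ν i = μ i) :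
    infinitePi ν = ((ν i₀).prod (infinitePi μ)).map (fun p => update p.2 i₀ p.1) := by
  symm
  refine eq_infinitePi ν fun s t ht => ?_
  rw [Measure.map_apply (by fun_prop) (.pi s.countable_toSet fun i _ => ht i),
    preimage_update_pi, Measure.prod_prod, infinitePi_pi _ fun i _ => ht i,
    Finset.prod_congr rfl fun i hi => by rw [← h i (Finset.ne_of_mem_erase hi)]]
  by_cases hi₀ : i₀ ∈ s
  · simp only [hi₀, forall_const, ofPred_mem_eq]
    exact Finset.mul_prod_erase s (fun i => ν i (t i)) hi₀
  · simp [hi₀]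

lemma infinitePi_apply_le_add_of_eq_of_ne {μ ν : ∀ i, Measure (X i)}
    [∀ i, IsProbabilityMeasure (μ i)] [∀ i, IsProbabilityMeasure (ν i)] {i₀ : ι} (hμν : ∀ i ≠ i₀, μ i = ν i) {D : ℝ≥0∞}
    (h : ∀ A, MeasurableSet A → μ i₀ A ≤ ν i₀ A + D) {B : Set (∀ i, X i)}
    (hB : MeasurableSet B) :
    infinitePi μ B ≤ infinitePi ν B + D := by
  classical
  have hupdate : Measurable fun p : X i₀ × (∀ i, X i) => update p.2 i₀ p.1 := by fun_prop
  rw [infinitePi_eq_map_prod_update μ μ i₀ fun _ _ => rfl,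
    infinitePi_eq_map_prod_update μ ν i₀ fun i hi => (hμν i hi).symm,
    map_apply hupdate hB, map_apply hupdate hB]
  exact prod_apply_le_add_of_forall_le_add h (hupdate hB)

end InfinitePi

lemma infinitePi_gaussianReal_map_const_add {ι : Type*} (v : ℝ≥0) (f : ι → ℝ) :
    (infinitePi fun _ : ι => gaussianReal 0 v).map (fun z i => f i + z i)
      = infinitePi fun i => gaussianReal (f i) v := by
  rw [infinitePi_map_pi _ fun i => measurable_const_add (f i)]
  congr with i : 1
  rw [gaussianReal_map_const_add, zero_add]

lemma infinitePi_gaussianReal_le_single_add {ι : Type*} [DecidableEq ι] (i₀ : ι) {ε : ℝ}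
    (hε : 0 ≤ ε) {B : Set (ι → ℝ)} (hB : MeasurableSet B) :
    infinitePi (fun _ : ι => gaussianReal 0 1) B
      ≤ infinitePi (fun i => gaussianReal ((Pi.single i₀ ε : ι → ℝ) i) 1) B + ENNReal.ofReal ε := by
  refine infinitePi_apply_le_add_of_eq_of_ne (i₀ := i₀) (fun i hi => ?_) (fun A hA => ?_) hB
  · rw [Pi.single_eq_of_ne hi]
  · rw [Pi.single_eq_same]
    exact gaussianReal_apply_le_shift_add hε hA

lemma exists_nat_two_rpow_le_lt {a x : ℝ} (ha : 0 < a) (hx : 1 ≤ x) :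
    ∃ l : ℕ, (2 : ℝ) ^ ((l : ℝ) * a) ≤ x ∧ x < 2 ^ (((l : ℝ) + 1) * a) := by
  set y := Real.logb 2 x / a
  have hy : 0 ≤ y := div_nonneg (Real.logb_nonneg one_lt_two hx) ha.le
  have hx' : x = 2 ^ (y * a) := by
    rw [div_mul_cancel₀ _ ha.ne', Real.rpow_logb two_pos (by norm_num) (by linarith)]
  refine ⟨⌊y⌋₊, ?_, ?_⟩ <;> rw [hx']
  · gcongr
    · norm_num
    · exact Nat.floor_le hy
  · exact Real.rpow_lt_rpow_of_exponent_lt one_lt_two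
      (mul_lt_mul_of_pos_right (Nat.lt_floor_add_one y) ha)

/-- `l` is the largest level at which a coefficient `ε` fits into `H(β, M)`; the second bound
comes from its maximality. -/
lemma exists_resolution_level {β M ε : ℝ} (hβ : 0 < β) (hε : 0 < ε) (hεM : ε ≤ M) :
    ∃ l : ℕ, ε ≤ M * 2 ^ (-(l : ℝ) * (1 / 2 + β)) ∧
      M ^ (1 / (2 * β + 1)) / 2 ^ (1 / 2 : ℝ) * ε ^ (2 * β / (2 * β + 1))
        ≤ 2 ^ ((l : ℝ) / 2) * ε := by
  have hM : 0 < M := hε.trans_le hεM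
  obtain ⟨l, hle, hlt⟩ := exists_nat_two_rpow_le_lt (by positivity : 0 < 1 / 2 + β)
    ((one_le_div hε).mpr hεM)
  refine ⟨l, ?_, ?_⟩
  · rw [neg_mul, Real.rpow_neg zero_le_two, ← div_eq_mul_inv,
      le_div_iff₀ (by positivity), ← le_div_iff₀' hε]
    exact hle
  · have hr : 2 * β / (2 * β + 1) = 1 - 1 / (2 * β + 1) := by field_simp; ring
    have hroot : (M / ε) ^ (1 / (2 * β + 1)) ≤ 2 ^ ((l : ℝ) / 2) * 2 ^ (1 / 2 : ℝ) := by
      rw [← Real.rpow_add two_pos]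
      calc (M / ε) ^ (1 / (2 * β + 1))
          ≤ ((2 : ℝ) ^ (((l : ℝ) + 1) * (1 / 2 + β))) ^ (1 / (2 * β + 1)) := by
            gcongr
      _ = 2 ^ ((l : ℝ) / 2 + 1 / 2) := by
            rw [← Real.rpow_mul zero_le_two]
            congr 1
            field_simp
            ring
    calc M ^ (1 / (2 * β + 1)) / 2 ^ (1 / 2 : ℝ) * ε ^ (2 * β / (2 * β + 1))
        = (M / ε) ^ (1 / (2 * β + 1)) * ε / 2 ^ (1 / 2 : ℝ) := by
          rw [hr, Real.rpow_sub hε, Real.rpow_one, Real.div_rpow hM.le hε.le]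
          field_simp
      _ ≤ 2 ^ ((l : ℝ) / 2) * ε := by
          rw [div_le_iff₀ (by positivity)]
          nlinarith

def holderBall (β M : ℝ) : Set (WIdx → ℝ) :=
  {f | ∀ (l : ℕ) (k : Fin (2 ^ l)), |f ⟨l, k⟩| ≤ M * 2 ^ (-(l : ℝ) * (1 / 2 + β))}

lemma zero_mem_holderBall (β : ℝ) {M : ℝ} (hM : 0 ≤ M) : 0 ∈ holderBall β M :=
  fun _ _ => by rw [Pi.zero_apply, abs_zero]; positivity

lemma single_mem_holderBall {β M : ℝ} (hM : 0 ≤ M) {l : ℕ} (k : Fin (2 ^ l)) {a : ℝ}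
    (ha : |a| ≤ M * 2 ^ (-(l : ℝ) * (1 / 2 + β))) :
    Pi.single (⟨l, k⟩ : WIdx) a ∈ holderBall β M := by
  intro l' k'
  rcases eq_or_ne (⟨l', k'⟩ : WIdx) ⟨l, k⟩ with h | h
  · rw [h, Pi.single_eq_same]
    obtain rfl : l' = l := congrArg Sigma.fst h
    exact ha
  · rw [Pi.single_eq_of_ne h, abs_zero]
    positivity

lemma tsum_two_rpow_mul_iSup_abs_single (l : ℕ) (k : Fin (2 ^ l)) (a : ℝ) :
    ∑' l' : ℕ, 2 ^ ((l' : ℝ) / 2) *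
        ⨆ k' : Fin (2 ^ l'), |(Pi.single (⟨l, k⟩ : WIdx) a : WIdx → ℝ) ⟨l', k'⟩|
      = 2 ^ ((l : ℝ) / 2) * |a| := by
  rw [tsum_eq_single l fun l' hl' => ?_]
  · congr 1
    refine le_antisymm (ciSup_le fun k' => ?_) (le_ciSup_of_le (Finite.bddAbove_range _) k ?_)
    · rw [Pi.single_apply]
      split_ifs <;> simp
    · rw [Pi.single_eq_same]
  · have hne : ∀ k' : Fin (2 ^ l'), (⟨l', k'⟩ : WIdx) ≠ ⟨l, k⟩ :=
      fun k' h => hl' (congrArg Sigma.fst h)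
    simp [Pi.single_eq_of_ne (hne _)]

theorem stmt15_general (β M C₁ : ℝ) (hβ : 0 < β) (hM : 0 < M) (hC₁ : 0 < C₁)
    (γ : Measure (WIdx → ℝ))
    (hγ : ∀ s : Finset WIdx,
      γ.map (fun x (i : s) => x i.1) = Measure.pi (fun _ : s => gaussianReal 0 1))
    (supNorm : (WIdx → ℝ) → ℝ)
    (hsup : ∀ f : WIdx → ℝ,
      C₁ * ∑' l : ℕ, 2 ^ ((l : ℝ) / 2) * (⨆ k : Fin (2 ^ l), |f ⟨l, k⟩|) ≤ supNorm f) :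
    ∃ c > (0:ℝ), ∃ ε₀ > (0:ℝ), ∀ ε : ℝ, 0 < ε → ε ≤ ε₀ →
      ∃ f₁ f₂ : WIdx → ℝ,
        (∀ (l : ℕ) (k : Fin (2 ^ l)), |f₁ ⟨l, k⟩| ≤ M * 2 ^ (-(l : ℝ) * (1/2 + β))) ∧
        (∀ (l : ℕ) (k : Fin (2 ^ l)), |f₂ ⟨l, k⟩| ≤ M * 2 ^ (-(l : ℝ) * (1/2 + β))) ∧
        tvDist (γ.map (fun z i => f₁ i + z i)) (γ.map (fun z i => f₂ i + z i)) ≤ ε / (1 - ε) ∧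
        c * ε ^ (2 * β / (2 * β + 1)) ≤ supNorm (fun i => f₁ i - f₂ i) := by
  obtain rfl : γ = infinitePi fun _ => gaussianReal 0 1 :=
    IsProjectiveLimit.unique hγ (isProjectiveLimit_infinitePi _)
  refine ⟨C₁ * (M ^ (1 / (2 * β + 1)) / 2 ^ (1 / 2 : ℝ)), by positivity, min M (1 / 2),
    by positivity, fun ε hε hε₀ => ?_⟩
  obtain ⟨l, hholder, hnorm⟩ := exists_resolution_level hβ hε (hε₀.trans (min_le_left _ _))
  let i₀ : WIdx := ⟨l, ⟨0, Nat.two_pow_pos l⟩⟩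
  refine ⟨0, Pi.single i₀ ε, zero_mem_holderBall β hM.le,
    single_mem_holderBall hM.le _ (by rwa [abs_of_pos hε]), ?_, ?_⟩
  · rw [infinitePi_gaussianReal_map_const_add, infinitePi_gaussianReal_map_const_add]
    refine (tvDist_le_of_forall_le_add hε.le fun B hB => ?_).trans ?_
    · simpa using infinitePi_gaussianReal_le_single_add i₀ hε.le hB
    · have hε_le_half : ε ≤ 1 / 2 := hε₀.trans (min_le_right _ _)
      exact le_div_self hε.le (by linarith) (by linarith)
  · refine le_trans ?_ (hsup _)
    simp only [Pi.zero_apply, zero_sub, abs_neg, tsum_two_rpow_mul_iSup_abs_single, abs_of_pos hε]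
    rw [mul_assoc]
    gcongr

/-- in the Gaussian white noise model with Hölder class
`H(β,M) = {f : |f_{lk}| ≤ M 2^{-l(1/2+β)}}`, the modulus of continuity under the supremum
norm (any norm satisfying the standard wavelet lower bound) satisfies
`ω(ε) ≥ c ε^{2β/(2β+1)}` for all small `ε`: there exist `f₁, f₂ ∈ H(β,M)` with
`TV(P_{f₁},P_{f₂}) ≤ ε/(1-ε)` and `‖f₁-f₂‖_∞ ≥ c ε^{2β/(2β+1)}`. -/
theorem stmt15 (β M C₁ : ℝ) (hβ : 0 < β) (hM : 0 < M) (hC₁ : 0 < C₁)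
    (γ : Measure (WIdx → ℝ)) [IsProbabilityMeasure γ]
    (hγ : ∀ s : Finset WIdx,
      γ.map (fun x (i : s) => x i.1) = Measure.pi (fun _ : s => gaussianReal 0 1))
    (supNorm : (WIdx → ℝ) → ℝ)
    (hsup : ∀ f : WIdx → ℝ,
      C₁ * ∑' l : ℕ, 2 ^ ((l : ℝ) / 2) * (⨆ k : Fin (2 ^ l), |f ⟨l, k⟩|) ≤ supNorm f) :
    ∃ c > (0:ℝ), ∃ ε₀ > (0:ℝ), ∀ ε : ℝ, 0 < ε → ε ≤ ε₀ →
      ∃ f₁ f₂ : WIdx → ℝ,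
        (∀ (l : ℕ) (k : Fin (2 ^ l)), |f₁ ⟨l, k⟩| ≤ M * 2 ^ (-(l : ℝ) * (1/2 + β))) ∧
        (∀ (l : ℕ) (k : Fin (2 ^ l)), |f₂ ⟨l, k⟩| ≤ M * 2 ^ (-(l : ℝ) * (1/2 + β))) ∧
        tvDist (γ.map (fun z i => f₁ i + z i)) (γ.map (fun z i => f₂ i + z i)) ≤ ε / (1 - ε) ∧
        c * ε ^ (2 * β / (2 * β + 1)) ≤ supNorm (fun i => f₁ i - f₂ i) :=
  stmt15_general β M C₁ hβ hM hC₁ γ hγ supNorm hsup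
end
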